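/- arXiv:1807.06914 — 8 statements merged into one kernel-verified Lean document; each statement's English description precedes it below -/
import Mathlib

section
/- In any finite simple graph G, an independent set S is maximum if and only if every independent set A disjoint from S can be matched into S (i.e., there exists a matching pairing each vertex of A with a distinct neighbor in S). -/
open SimpleGraph

variable {V : Type*} [Fintype V] [DecidableEq V]

/-- A set of vertices is independent: no two of its vertices are adjacent. -/
def isIndep (G : SimpleGraph V) (S : Finset V) : Prop :=
  ∀ ⦃a⦄, a ∈ S → ∀ ⦃b⦄, b ∈ S → ¬ G.Adj a b

/-- The independence number `α(G)`. -/
noncomputable def indepNum (G : SimpleGraph V) : ℕ :=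
  sSup {n | ∃ S : Finset V, isIndep G S ∧ S.card = n}

/-- A maximum independent set: an independent set of size `α(G)`. -/
def isMaxIndep (G : SimpleGraph V) (S : Finset V) : Prop :=
  isIndep G S ∧ S.card = _root_.indepNum G

/-- `G` has two disjoint maximum independent sets. -/
def hasTwoDisjointMaxIndep (G : SimpleGraph V) : Prop :=
  ∃ S₁ S₂ : Finset V, isMaxIndep G S₁ ∧ isMaxIndep G S₂ ∧ Disjoint S₁ S₂

/-- A matching: a set of edges of `G`, pairwise sharing no vertex. -/
def isMatchingF (G : SimpleGraph V) (M : Finset (Sym2 V)) : Prop :=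
  (∀ e ∈ M, e ∈ G.edgeSet) ∧
  (∀ e ∈ M, ∀ f ∈ M, e ≠ f → ∀ v : V, v ∈ e → v ∉ f)

/-- The matching number `μ(G)`. -/
noncomputable def matchNum (G : SimpleGraph V) : ℕ :=
  sSup {n | ∃ M : Finset (Sym2 V), isMatchingF G M ∧ M.card = n}

/-- A shedding vertex: for every independent set `S` of `G − N[v]` there is a
neighbor `u` of `v` with `S ∪ {u}` independent. -/
def IsShedding (G : SimpleGraph V) (v : V) : Prop :=
  ∀ S : Finset V, isIndep G S → (∀ w ∈ S, w ≠ v ∧ ¬ G.Adj v w) →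
    ∃ u, G.Adj v u ∧ isIndep G (insert u S)

/-- A perfect matching of `G`: a matching covering every vertex. -/
def hasPerfectMatchingF (G : SimpleGraph V) : Prop :=
  ∃ M : Finset (Sym2 V), isMatchingF G M ∧ ∀ v : V, ∃ e ∈ M, v ∈ e

/-- The disjoint union of `k` copies of `K₂`. -/
def copiesK2 (k : ℕ) : SimpleGraph (Fin k × Fin 2) :=
  SimpleGraph.fromRel (fun p q => p.1 = q.1)

/-!
If `S` is a maximum independent set and `B ⊆ A`, replacing the neighbours `N_S(B)` of `B` in `S`
by `B` yields another independent set, so `|B| ≤ |N_S(B)|` and Hall's theorem matches `A` into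
`S`. Conversely, for independent `T`, a matching of `T \ S` into `S` lands outside `T ∩ S`, since
its images are adjacent to vertices of `T`; hence `|T| ≤ |S|`.
-/

open Finset

theorem Finset.exists_injOn_of_forall_card_le_card_filter {α : Type*} [Fintype α] [DecidableEq α]
    (r : α → α → Prop) [DecidableRel r] (A S : Finset α)
    (hall : ∀ B ⊆ A, #B ≤ #{b ∈ S | ∃ a ∈ B, r a b}) :
    ∃ f : α → α, Set.InjOn f A ∧ ∀ a ∈ A, f a ∈ S ∧ r a (f a) := by
  have hall' : ∀ B : Finset A, #B ≤ #{b | ∃ a ∈ B, b ∈ S ∧ r a b} := fun B => by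
    convert hall (B.map (.subtype _)) (fun _ hx => property_of_mem_map_subtype B hx) using 2
    · simp
    · ext; simp [and_left_comm, exists_and_left]
  obtain ⟨g, hg, hgr⟩ :=
    (Fintype.all_card_le_filter_rel_iff_exists_injective (fun (a : A) b => b ∈ S ∧ r a b)).mp hall'
  refine ⟨fun x => if h : x ∈ A then g ⟨x, h⟩ else x, ?_,
    fun a ha => by simpa [ha] using hgr ⟨a, ha⟩⟩
  intro x hx y hy hxy
  simp only [dif_pos (mem_coe.mp hx), dif_pos (mem_coe.mp hy)] at hxy
  exact congrArg Subtype.val (hg hxy)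

section Independence

variable {α : Type*} {G : SimpleGraph α}

theorem isIndep.mono {S T : Finset α} (hT : isIndep G T) (hST : S ⊆ T) : isIndep G S :=
  fun _ ha _ hb => hT (hST ha) (hST hb)

theorem isIndep_union [DecidableEq α] {S T : Finset α} (hS : isIndep G S) (hT : isIndep G T)
    (hST : ∀ a ∈ S, ∀ b ∈ T, ¬ G.Adj a b) : isIndep G (S ∪ T) := by
  intro a ha b hb
  rcases mem_union.mp ha with ha | ha <;> rcases mem_union.mp hb with hb | hb
  · exact hS ha hb
  · exact hST a ha b hb
  · exact fun h => hST b hb a ha h.symm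
  · exact hT ha hb

theorem card_le_indepNum [Fintype α] {T : Finset α} (hT : isIndep G T) : #T ≤ _root_.indepNum G :=
  le_csSup ⟨Fintype.card α, fun _ ⟨U, _, hU⟩ => hU ▸ card_le_univ U⟩ ⟨T, hT, rfl⟩

theorem card_eq_indepNum_iff [Fintype α] {S : Finset α} (hS : isIndep G S) :
    #S = _root_.indepNum G ↔ ∀ T, isIndep G T → #T ≤ #S := by
  refine ⟨fun h T hT => h ▸ card_le_indepNum hT, fun h => ?_⟩
  refine le_antisymm (card_le_indepNum hS) (csSup_le ⟨_, S, hS, rfl⟩ ?_)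
  rintro _ ⟨T, hT, rfl⟩
  exact h T hT

theorem card_le_card_nbhd_of_forall_card_le [DecidableEq α] [DecidableRel G.Adj]
    {S B : Finset α} (hS : isIndep G S) (hmax : ∀ T, isIndep G T → #T ≤ #S)
    (hB : isIndep G B) (hBS : Disjoint B S) :
    #B ≤ #{v ∈ S | ∃ a ∈ B, G.Adj a v} := by
  set N : Finset α := {v ∈ S | ∃ a ∈ B, G.Adj a v}
  have hNS : N ⊆ S := filter_subset _ _
  have hswap : isIndep G ((S \ N) ∪ B) := by
    refine isIndep_union (hS.mono sdiff_subset) hB fun v hv a ha hva => ?_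
    exact (mem_sdiff.mp hv).2 (mem_filter.mpr ⟨(mem_sdiff.mp hv).1, a, ha, hva.symm⟩)
  have hcard : #((S \ N) ∪ B) = #S - #N + #B := by
    rw [card_union_of_disjoint (disjoint_of_subset_left sdiff_subset hBS.symm),
      card_sdiff_of_subset hNS]
  have := hmax _ hswap
  have := card_le_card hNS
  omega

theorem card_le_of_matching_sdiff [DecidableEq α] {S T : Finset α} (hT : isIndep G T) {f : α → α}
    (hf : Set.InjOn f ↑(T \ S)) (hfS : ∀ a ∈ T \ S, f a ∈ S ∧ G.Adj a (f a)) : #T ≤ #S := by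
  have himg : (T \ S).image f ⊆ S := fun x hx => by
    obtain ⟨a, ha, rfl⟩ := mem_image.mp hx
    exact (hfS a ha).1
  have hdisj : Disjoint (T ∩ S) ((T \ S).image f) := disjoint_left.mpr fun x hx hx' => by
    obtain ⟨a, ha, rfl⟩ := mem_image.mp hx'
    exact hT (mem_sdiff.mp ha).1 (mem_inter.mp hx).1 (hfS a ha).2
  calc #T = #(T ∩ S) + #((T \ S).image f) := by
          rw [card_image_of_injOn hf, add_comm, card_sdiff_add_card_inter]
    _ = #((T ∩ S) ∪ (T \ S).image f) := (card_union_of_disjoint hdisj).symm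
    _ ≤ #S := card_le_card (union_subset inter_subset_right himg)

end Independence

/-- An independent set `S` is maximum iff every independent set disjoint from `S`
can be matched into `S`. -/
theorem stmt0 (G : SimpleGraph V) (S : Finset V) (hS : isIndep G S) :
    S.card = _root_.indepNum G ↔
      ∀ A : Finset V, isIndep G A → Disjoint A S →
        ∃ f : V → V, Set.InjOn f ↑A ∧ ∀ a ∈ A, f a ∈ S ∧ G.Adj a (f a) := by
  classical
  rw [card_eq_indepNum_iff hS]
  constructor
  · intro hmax A hA hAS
    exact exists_injOn_of_forall_card_le_card_filter _ A S fun B hBA =>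
      card_le_card_nbhd_of_forall_card_le hS hmax (hA.mono hBA) (disjoint_of_subset_left hBA hAS)
  · intro hmatch T hT
    obtain ⟨f, hf, hfS⟩ := hmatch (T \ S) (hT.mono sdiff_subset) sdiff_disjoint
    exact card_le_of_matching_sdiff hT hf hfS
end

section
/- If a graph G has two disjoint maximum independent sets, then the matching number of G is at least the independence number of G, i.e., μ(G) ≥ α(G). -/
open SimpleGraph

variable {V : Type*} [Fintype V] [DecidableEq V]

/-! Each vertex of a maximum independent set `S₁` can be matched into a disjoint maximum
independent set `S₂`: if some `A ⊆ S₁` had fewer than `|A|` neighbours in `S₂`, then swapping those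
neighbours for `A` would give an independent set larger than `S₂`. So Hall's condition holds, and
the resulting injection `S₁ → S₂` along edges is a matching with `α(G)` edges. -/

namespace SimpleGraph

omit [DecidableEq V] in
theorem card_le_indepNum {G : SimpleGraph V} {S : Finset V} (hS : isIndep G S) :
    S.card ≤ _root_.indepNum G :=
  le_csSup ⟨Fintype.card V, fun _ ⟨T, _, hT⟩ => hT ▸ T.card_le_univ⟩ ⟨S, hS, rfl⟩

omit [DecidableEq V] in
theorem card_le_matchNum {G : SimpleGraph V} {M : Finset (Sym2 V)} (hM : isMatchingF G M) :
    M.card ≤ matchNum G :=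
  le_csSup ⟨Fintype.card (Sym2 V), fun _ ⟨T, _, hT⟩ => hT ▸ T.card_le_univ⟩ ⟨M, hM, rfl⟩

omit [Fintype V] in
theorem isIndep_union_sdiff_neighbors {G : SimpleGraph V} [DecidableRel G.Adj]
    {A S : Finset V} (hA : isIndep G A) (hS : isIndep G S) :
    isIndep G (A ∪ (S \ A.biUnion fun x => S.filter (G.Adj x))) := by
  have hN : ∀ ⦃a⦄, a ∈ A → ∀ ⦃b⦄, b ∈ S → G.Adj a b → b ∈ A.biUnion fun x => S.filter (G.Adj x) :=
    fun a ha b hb hab => Finset.mem_biUnion.mpr ⟨a, ha, Finset.mem_filter.mpr ⟨hb, hab⟩⟩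
  intro a ha b hb hab
  rcases Finset.mem_union.mp ha with ha | ha <;> rcases Finset.mem_union.mp hb with hb | hb
  · exact hA ha hb hab
  · exact (Finset.mem_sdiff.mp hb).2 (hN ha (Finset.mem_sdiff.mp hb).1 hab)
  · exact (Finset.mem_sdiff.mp ha).2 (hN hb (Finset.mem_sdiff.mp ha).1 hab.symm)
  · exact hS (Finset.mem_sdiff.mp ha).1 (Finset.mem_sdiff.mp hb).1 hab

theorem card_le_card_neighbors_of_isMaxIndep {G : SimpleGraph V} [DecidableRel G.Adj]
    {A S : Finset V} (hA : isIndep G A) (hS : isMaxIndep G S) (hAS : Disjoint A S) :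
    A.card ≤ (A.biUnion fun x => S.filter (G.Adj x)).card := by
  set N := A.biUnion fun x => S.filter (G.Adj x)
  have hNS : N ⊆ S := Finset.biUnion_subset.mpr fun _ _ => Finset.filter_subset _ _
  have hle : (A ∪ (S \ N)).card ≤ S.card :=
    hS.2 ▸ card_le_indepNum (isIndep_union_sdiff_neighbors hA hS.1)
  rw [Finset.card_union_of_disjoint (hAS.mono_right Finset.sdiff_subset),
    Finset.card_sdiff_of_subset hNS] at hle
  have := Finset.card_le_card hNS
  omega

theorem exists_injective_adj_of_isMaxIndep {G : SimpleGraph V} {S₁ S₂ : Finset V}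
    (h₁ : isIndep G S₁) (h₂ : isMaxIndep G S₂) (hdisj : Disjoint S₁ S₂) :
    ∃ f : S₁ → V, Function.Injective f ∧ ∀ x : S₁, f x ∈ S₂ ∧ G.Adj x (f x) := by
  classical
  have hall : ∀ A : Finset S₁,
      A.card ≤ (A.biUnion fun x => S₂.filter (G.Adj x)).card := fun A => by
    have hA : A.map (Function.Embedding.subtype _) ⊆ S₁ := Finset.map_subtype_subset A
    have := card_le_card_neighbors_of_isMaxIndep (fun a ha b hb => h₁ (hA ha) (hA hb)) h₂
      (hdisj.mono_left hA)
    rwa [Finset.card_map, Finset.map_eq_image, Finset.image_biUnion] at this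
  obtain ⟨f, hf, hfS⟩ := (Finset.all_card_le_biUnion_card_iff_exists_injective _).mp hall
  exact ⟨f, hf, fun x => Finset.mem_filter.mp (hfS x)⟩

omit [Fintype V] in
theorem exists_isMatchingF_card_eq {G : SimpleGraph V} {S : Finset V} (f : S → V)
    (hf : Function.Injective f) (hadj : ∀ x : S, G.Adj x (f x)) (hout : ∀ x : S, f x ∉ S) :
    ∃ M : Finset (Sym2 V), isMatchingF G M ∧ M.card = S.card := by
  have hne : ∀ x y : S, (x : V) ≠ f y := fun x y hxy => hout y (hxy ▸ x.2)
  refine ⟨S.attach.image fun x => s(x.1, f x), ⟨?_, ?_⟩, ?_⟩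
  · simp only [Finset.mem_image, Finset.mem_attach, true_and, forall_exists_index]
    rintro _ x rfl
    exact hadj x
  · simp only [Finset.mem_image, Finset.mem_attach, true_and]
    rintro _ ⟨x, rfl⟩ _ ⟨y, rfl⟩ hxy v hvx hvy
    rw [Sym2.mem_iff] at hvx hvy
    rcases hvx with rfl | rfl <;> rcases hvy with h | h
    · exact hxy (by rw [Subtype.coe_injective h])
    · exact hne x y h
    · exact hne y x h.symm
    · exact hxy (by rw [hf h])
  · rw [Finset.card_image_of_injective, Finset.card_attach]
    intro x y hxy
    rcases Sym2.eq_iff.mp hxy with ⟨h, _⟩ | ⟨h, _⟩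
    · exact Subtype.coe_injective h
    · exact absurd h (hne x y)

end SimpleGraph

/-- If `G` has two disjoint maximum independent sets then `μ(G) ≥ α(G)`. -/
theorem stmt4 (G : SimpleGraph V) (h : hasTwoDisjointMaxIndep G) :
    _root_.indepNum G ≤ matchNum G := by
  obtain ⟨S₁, S₂, h₁, h₂, hdisj⟩ := h
  obtain ⟨f, hf, hfS₂⟩ := exists_injective_adj_of_isMaxIndep h₁.1 h₂ hdisj
  obtain ⟨M, hM, hMcard⟩ := exists_isMatchingF_card_eq f hf (fun x => (hfS₂ x).2)
    fun x => Finset.disjoint_right.mp hdisj (hfS₂ x).1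
  calc _root_.indepNum G = M.card := by rw [hMcard, h₁.2]
    _ ≤ matchNum G := card_le_matchNum hM
end

section
/- Let G be a graph and S an independent set all of whose vertices are shedding vertices. Then the number of independent sets of G of cardinality |S| is at least 2^{|S|}. -/
open SimpleGraph

variable {V : Type*} [Fintype V] [DecidableEq V]

/-! Sending an independent set `T` of size `|S|` to its trace `T ∩ S` hits every subset of `S`:
starting from `S` itself, a vertex `v ∈ S ∩ T` can be traded for a neighbour `u` by sheddingness
of `v`, and `u ∉ S` because `S` is independent. Hence there are at least `2^|S|` such `T`. -/

omit [Fintype V] in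
theorem IsShedding.exists_adj_isIndep_insert_erase {G : SimpleGraph V} {v : V}
    (hv : IsShedding G v) {T : Finset V} (hT : isIndep G T) (hvT : v ∈ T) :
    ∃ u, G.Adj v u ∧ isIndep G (insert u (T.erase v)) :=
  hv _ (fun _ ha _ hb => hT (Finset.mem_of_mem_erase ha) (Finset.mem_of_mem_erase hb))
    fun _ hw => ⟨Finset.ne_of_mem_erase hw, hT hvT (Finset.mem_of_mem_erase hw)⟩

omit [Fintype V] in
theorem exists_isIndep_card_eq_inter_eq_sdiff {G : SimpleGraph V} {S B : Finset V}
    (hS : isIndep G S) (hBS : B ⊆ S) (hshed : ∀ v ∈ B, IsShedding G v) :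
    ∃ T, isIndep G T ∧ T.card = S.card ∧ T ∩ S = S \ B := by
  induction B using Finset.induction_on with
  | empty => exact ⟨S, hS, rfl, by simp⟩
  | insert v B hvB ih =>
    obtain ⟨hvS, hBS⟩ := Finset.insert_subset_iff.mp hBS
    obtain ⟨T, hT, hcard, hTS⟩ :=
      ih hBS fun w hw => hshed w (Finset.mem_insert_of_mem hw)
    have hvT : v ∈ T := (Finset.mem_inter.mp (hTS ▸ Finset.mem_sdiff.mpr ⟨hvS, hvB⟩)).1
    obtain ⟨u, hvu, hU⟩ :=
      (hshed v (Finset.mem_insert_self v B)).exists_adj_isIndep_insert_erase hT hvT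
    have huT : u ∉ T.erase v := fun hu => hT hvT (Finset.mem_of_mem_erase hu) hvu
    have huS : u ∉ S := fun hu => hS hvS hu hvu
    refine ⟨_, hU, ?_, ?_⟩
    · rw [Finset.card_insert_of_notMem huT, Finset.card_erase_of_mem hvT, hcard,
        Nat.sub_add_cancel (Finset.card_pos.mpr ⟨v, hvS⟩)]
    · rw [Finset.insert_inter_of_notMem huS, Finset.erase_inter, hTS, Finset.sdiff_insert]

omit [Fintype V] in
theorem exists_isIndep_card_eq_inter_eq {G : SimpleGraph V} {S A : Finset V}
    (hS : isIndep G S) (hshed : ∀ v ∈ S, IsShedding G v) (hAS : A ⊆ S) :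
    ∃ T, isIndep G T ∧ T.card = S.card ∧ T ∩ S = A := by
  simpa [Finset.sdiff_sdiff_eq_self hAS] using
    exists_isIndep_card_eq_inter_eq_sdiff (B := S \ A) hS Finset.sdiff_subset
      fun v hv => hshed v (Finset.mem_sdiff.mp hv).1

/-- If `S` is an independent set of shedding vertices, then `G` has at least
`2^{|S|}` independent sets of cardinality `|S|`. -/
theorem stmt5 (G : SimpleGraph V) (S : Finset V) (hS : isIndep G S)
    (hshed : ∀ v ∈ S, IsShedding G v) :
    2 ^ S.card ≤ {T : Finset V | isIndep G T ∧ T.card = S.card}.ncard := by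
  classical
  rw [← Finset.card_powerset, Set.ncard_eq_toFinset_card']
  refine Finset.card_le_card_of_surjOn (· ∩ S) fun A hA => ?_
  obtain ⟨T, hT, hcard, hTS⟩ :=
    exists_isIndep_card_eq_inter_eq hS hshed (Finset.mem_powerset.mp hA)
  exact ⟨T, by simp [hT, hcard], hTS⟩
end

section
/- If a graph G has a maximum independent set S consisting only of shedding vertices, then G has at least 2^{α(G)} maximum independent sets, and moreover some maximum independent set is disjoint from S. -/
/-!
Starting from a maximum independent set `S` of shedding vertices, any vertex `v ∈ S` still
in the current maximum independent set `T` can be traded for a neighbour `u ∉ S`, since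
`T \ {v}` is independent in `G − N[v]`. Repeating this for the vertices of an arbitrary
`A ⊆ S` gives a maximum independent set meeting `S` in exactly `S \ A`. So each of the
`2^|S|` subsets of `S` is the trace `T ∩ S` of some maximum independent set `T`; one with
empty trace is disjoint from `S`.
-/

open SimpleGraph

variable {V : Type*} [Fintype V] [DecidableEq V]

omit [Fintype V] in
lemma isIndep_erase {G : SimpleGraph V} {T : Finset V} (hT : isIndep G T) (v : V) :
    isIndep G (T.erase v) :=
  fun _ ha _ hb => hT (Finset.mem_of_mem_erase ha) (Finset.mem_of_mem_erase hb)

omit [Fintype V] in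
lemma IsShedding.exists_swap {G : SimpleGraph V} {v : V} (hv : IsShedding G v)
    {T : Finset V} (hT : isIndep G T) (hvT : v ∈ T) :
    ∃ u, G.Adj v u ∧ u ∉ T ∧ isIndep G (insert u (T.erase v)) := by
  obtain ⟨u, hvu, hu⟩ := hv (T.erase v) (isIndep_erase hT v) fun w hw =>
    ⟨Finset.ne_of_mem_erase hw, hT hvT (Finset.mem_of_mem_erase hw)⟩
  exact ⟨u, hvu, fun huT => hT hvT huT hvu, hu⟩

omit [Fintype V] in
lemma exists_isIndep_inter_eq_sdiff {G : SimpleGraph V} {S : Finset V} (hS : isIndep G S)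
    (hshed : ∀ v ∈ S, IsShedding G v) {A : Finset V} (hA : A ⊆ S) :
    ∃ T, isIndep G T ∧ T.card = S.card ∧ T ∩ S = S \ A := by
  induction A using Finset.induction_on with
  | empty => exact ⟨S, hS, rfl, by simp⟩
  | @insert v A hvA ih =>
    have hvS : v ∈ S := hA (Finset.mem_insert_self v A)
    obtain ⟨T, hT, hTcard, hTS⟩ := ih ((Finset.subset_insert v A).trans hA)
    have hvT : v ∈ T := Finset.mem_of_mem_inter_left (s₂ := S) (by simp [hTS, hvS, hvA])
    obtain ⟨u, hvu, huT, hu⟩ := (hshed v hvS).exists_swap hT hvT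
    have huS : u ∉ S := fun huS => hS hvS huS hvu
    refine ⟨insert u (T.erase v), hu, ?_, ?_⟩
    · rw [Finset.card_insert_of_notMem (fun h => huT (Finset.mem_of_mem_erase h)),
        Finset.card_erase_of_mem hvT, hTcard, Nat.sub_add_cancel (Finset.card_pos.2 ⟨v, hvS⟩)]
    · ext w
      have hw := Finset.ext_iff.1 hTS w
      simp only [Finset.mem_inter, Finset.mem_insert, Finset.mem_erase, Finset.mem_sdiff] at hw ⊢
      grind

/-- If some maximum independent set `S` consists only of shedding vertices, then
`|Ω(G)| ≥ 2^{α(G)}` and some maximum independent set is disjoint from `S`. -/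
theorem stmt7 (G : SimpleGraph V) (S : Finset V) (hS : isMaxIndep G S)
    (hshed : ∀ v ∈ S, IsShedding G v) :
    2 ^ _root_.indepNum G ≤ {T : Finset V | isMaxIndep G T}.ncard ∧
      ∃ T : Finset V, isMaxIndep G T ∧ Disjoint S T := by
  have htrace : ∀ A ⊆ S, ∃ T, isMaxIndep G T ∧ T ∩ S = S \ A := fun A hA => by
    obtain ⟨T, hT, hcard, hTS⟩ := exists_isIndep_inter_eq_sdiff hS.1 hshed hA
    exact ⟨T, ⟨hT, hcard.trans hS.2⟩, hTS⟩
  constructor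
  · have hsurj : (S.powerset : Set (Finset V)) ⊆ (· ∩ S) '' {T | isMaxIndep G T} := by
      intro B hB
      obtain ⟨T, hT, hTS⟩ := htrace (S \ B) Finset.sdiff_subset
      refine ⟨T, hT, show T ∩ S = B from ?_⟩
      rw [hTS, Finset.sdiff_sdiff_eq_self (Finset.mem_powerset.1 hB)]
    calc 2 ^ _root_.indepNum G = (S.powerset : Set (Finset V)).ncard := by
          rw [Set.ncard_coe_finset, Finset.card_powerset, hS.2]
      _ ≤ ((· ∩ S) '' {T | isMaxIndep G T}).ncard := Set.ncard_le_ncard hsurj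
      _ ≤ {T : Finset V | isMaxIndep G T}.ncard := Set.ncard_image_le
  · obtain ⟨T, hT, hTS⟩ := htrace S subset_rfl
    rw [Finset.sdiff_self, ← Finset.disjoint_iff_inter_eq_empty] at hTS
    exact ⟨T, hT, hTS.symm⟩
end

section
/- Every codominated vertex of a graph is a shedding vertex, where v is codominated if there exists a vertex u ≠ v with N[u] ⊆ N[v]. -/
open SimpleGraph

variable {V : Type*} [Fintype V] [DecidableEq V]

section Codominated

variable {W : Type*} {G : SimpleGraph W} {u v : W}

theorem isIndep_insert [DecidableEq W] {S : Finset W} (hS : isIndep G S)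
    (hu : ∀ w ∈ S, ¬ G.Adj u w) : isIndep G (insert u S) := by
  intro a ha b hb hab
  rcases Finset.mem_insert.1 ha with rfl | haS <;> rcases Finset.mem_insert.1 hb with rfl | hbS
  · exact G.loopless.irrefl _ hab
  · exact hu b hbS hab
  · exact hu a haS hab.symm
  · exact hS haS hbS hab

theorem adj_of_closedNbhd_subset (hun : u ≠ v)
    (hsub : ∀ w : W, (w = u ∨ G.Adj u w) → (w = v ∨ G.Adj v w)) : G.Adj v u :=
  (hsub u (Or.inl rfl)).resolve_left hun

theorem not_adj_of_closedNbhd_subset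
    (hsub : ∀ w : W, (w = u ∨ G.Adj u w) → (w = v ∨ G.Adj v w)) {w : W}
    (hwv : w ≠ v) (hvw : ¬ G.Adj v w) : ¬ G.Adj u w := fun huw =>
  (hsub w (Or.inr huw)).elim hwv hvw

end Codominated

/-- Every codominated vertex is a shedding vertex. -/
theorem stmt8 (G : SimpleGraph V) (v : V)
    (h : ∃ u : V, u ≠ v ∧ ∀ w : V, (w = u ∨ G.Adj u w) → (w = v ∨ G.Adj v w)) :
    IsShedding G v := by
  obtain ⟨u, hun, hsub⟩ := h
  intro S hS hSv
  refine ⟨u, adj_of_closedNbhd_subset hun hsub, isIndep_insert hS fun w hw => ?_⟩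
  exact not_adj_of_closedNbhd_subset hsub (hSv w hw).1 (hSv w hw).2
end

section
/- In a bipartite graph, every shedding vertex is codominated; moreover, if a vertex x is codominated by a vertex y, then y is a leaf (has degree 1). -/
open SimpleGraph

variable {V : Type*} [Fintype V] [DecidableEq V]

def IsCodominatedBy {α : Type*} (G : SimpleGraph α) (x y : α) : Prop :=
  y ≠ x ∧ ∀ w, (w = y ∨ G.Adj y w) → (w = x ∨ G.Adj x w)

section

variable {α : Type*} {G : SimpleGraph α}

theorem SimpleGraph.Coloring.eq_of_adj_of_adj (c : G.Coloring (Fin 2)) {u v w : α}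
    (huv : G.Adj u v) (hvw : G.Adj v w) : c u = c w := by
  have := c.valid huv
  have := c.valid hvw
  omega

theorem SimpleGraph.Coloring.isIndep_of_forall_eq {β : Type*} (c : G.Coloring β) {S : Finset α}
    {b : β} (hS : ∀ w ∈ S, c w = b) : isIndep G S :=
  fun _ hu _ hw huw => c.valid huw (by rw [hS _ hu, hS _ hw])

theorem IsCodominatedBy.adj {x y : α} (h : IsCodominatedBy G x y) : G.Adj x y :=
  (h.2 y (Or.inl rfl)).resolve_left h.1

theorem IsCodominatedBy.neighborSet_eq (hG : G.CliqueFree 3) {x y : α}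
    (h : IsCodominatedBy G x y) : G.neighborSet y = {x} := by
  ext w
  simp only [mem_neighborSet, Set.mem_singleton_iff]
  constructor
  · intro hyw
    refine (h.2 w (Or.inr hyw)).resolve_right fun hxw => ?_
    exact G.isIndepSet_neighborSet_of_triangleFree hG x h.adj hxw (G.ne_of_adj hyw) hyw
  · rintro rfl
    exact h.adj.symm

end

/-- The codominating vertex is the neighbour that the shedding property provides for the set of
vertices at distance two from `v`, which is independent because it is monochromatic. -/
theorem IsShedding.exists_isCodominatedBy {G : SimpleGraph V} (hG : G.Colorable 2) {v : V}
    (hv : IsShedding G v) : ∃ u, IsCodominatedBy G v u := by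
  classical
  obtain ⟨c⟩ := hG
  let S := Finset.univ.filter fun w => w ≠ v ∧ ¬G.Adj v w ∧ ∃ u, G.Adj v u ∧ G.Adj u w
  have hS : isIndep G S := c.isIndep_of_forall_eq (b := c v) fun w hw => by
    obtain ⟨-, -, u, hvu, huw⟩ := (Finset.mem_filter.1 hw).2
    exact (c.eq_of_adj_of_adj hvu huw).symm
  obtain ⟨u, hvu, hSu⟩ := hv S hS fun w hw =>
    ⟨(Finset.mem_filter.1 hw).2.1, (Finset.mem_filter.1 hw).2.2.1⟩
  refine ⟨u, hvu.ne', fun w hw => ?_⟩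
  rcases hw with rfl | huw
  · exact Or.inr hvu
  by_contra! hw
  have hwS : w ∈ S := Finset.mem_filter.2 ⟨Finset.mem_univ w, hw.1, hw.2, u, hvu, huw⟩
  exact hSu (Finset.mem_insert_self u S) (Finset.mem_insert_of_mem hwS) huw

/-- In a bipartite graph every shedding vertex is codominated; moreover, if `x`
is codominated by `y`, then `y` is a leaf. -/
theorem stmt9 (G : SimpleGraph V) (hbip : G.Colorable 2) :
    (∀ v : V, IsShedding G v →
        ∃ u : V, u ≠ v ∧ ∀ w : V, (w = u ∨ G.Adj u w) → (w = v ∨ G.Adj v w)) ∧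
    (∀ x y : V, y ≠ x → (∀ w : V, (w = y ∨ G.Adj y w) → (w = x ∨ G.Adj x w)) →
        (G.neighborSet y).ncard = 1) := by
  refine ⟨fun v hv => hv.exists_isCodominatedBy hbip, fun x y hyx hdom => ?_⟩
  have htriangleFree : G.CliqueFree 3 := hbip.cliqueFree (by norm_num)
  rw [IsCodominatedBy.neighborSet_eq htriangleFree ⟨hyx, hdom⟩, Set.ncard_singleton]
end

section
/- If v is a simplicial vertex of a graph G, then every neighbor of v is a shedding vertex of G. -/
open SimpleGraph

variable {V : Type*} [Fintype V] [DecidableEq V]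

theorem isIndep.insert {α : Type*} [DecidableEq α] {G : SimpleGraph α} {S : Finset α} {a : α}
    (hS : isIndep G S) (ha : ∀ b ∈ S, ¬ G.Adj a b) : isIndep G (insert a S) := by
  intro x hx y hy
  rcases Finset.mem_insert.mp hx with rfl | hxS <;>
    rcases Finset.mem_insert.mp hy with rfl | hyS
  · exact G.irrefl
  · exact ha y hyS
  · exact fun hxy => ha x hxS hxy.symm
  · exact hS hxS hyS

def IsSimplicial {α : Type*} (G : SimpleGraph α) (v : α) : Prop :=
  ∀ a b : α, (a = v ∨ G.Adj v a) → (b = v ∨ G.Adj v b) → a ≠ b → G.Adj a b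

/-- `N[v] ⊆ N[u]` for every neighbour `u` of a simplicial vertex `v`. -/
theorem IsSimplicial.not_adj_of_not_adj_neighbor {α : Type*} {G : SimpleGraph α} {v u w : α}
    (hv : IsSimplicial G v) (hvu : G.Adj v u) (hwu : w ≠ u) (huw : ¬ G.Adj u w) :
    ¬ G.Adj v w := fun hvw => huw (hv u w (.inr hvu) (.inr hvw) hwu.symm)

/-- If `v` is a simplicial vertex, then every neighbor of `v` is a shedding
vertex. -/
theorem stmt10 (G : SimpleGraph V) (v : V)
    (hsimp : ∀ a b : V, (a = v ∨ G.Adj v a) → (b = v ∨ G.Adj v b) → a ≠ b →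
      G.Adj a b) :
    ∀ u : V, G.Adj v u → IsShedding G u := by
  intro u hvu S hS hSu
  refine ⟨v, hvu.symm, hS.insert fun w hw => ?_⟩
  obtain ⟨hwu, huw⟩ := hSu w hw
  exact IsSimplicial.not_adj_of_not_adj_neighbor hsimp hvu hwu huw
end

section
/- If G is a König–Egerváry graph, then the number of maximum independent sets of G is at most 2^{α(G)}, with equality if and only if G is the disjoint union of α(G) copies of K₂. -/
/-!
Fix a maximum matching `M`. An independent set `S` meets each edge of `M` at most once and
otherwise lies among the `|V| - 2|M|` unmatched vertices, so `|S| + |M| ≤ |V|`. In a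
König–Egerváry graph every maximum independent set attains this bound: it contains all unmatched
vertices and exactly one endpoint of each edge of `M`, so it is determined by that choice of
endpoints and there are at most `2^μ ≤ 2^α` of them. Equality forces `μ = α`, so `M` is
perfect, and every choice of endpoints must then be independent. An edge of `G` between two
different edges of `M` would spoil the choice taking both of its ends, so the edges of `G` are
exactly `M`.
-/

open SimpleGraph

variable {V : Type*} [Fintype V] [DecidableEq V]

omit [DecidableEq V] in
theorem bddAbove_card_isIndep (G : SimpleGraph V) :
    BddAbove {n | ∃ S : Finset V, isIndep G S ∧ S.card = n} :=
  ⟨Fintype.card V, by rintro n ⟨S, -, rfl⟩; exact S.card_le_univ⟩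

omit [DecidableEq V] in
theorem card_le_indepNum_s14 {G : SimpleGraph V} {S : Finset V} (hS : isIndep G S) :
    S.card ≤ _root_.indepNum G :=
  le_csSup (bddAbove_card_isIndep G) ⟨S, hS, rfl⟩

omit [DecidableEq V] in
theorem exists_isMaxIndep (G : SimpleGraph V) : ∃ S, isMaxIndep G S :=
  Nat.sSup_mem (s := {n | ∃ S : Finset V, isIndep G S ∧ S.card = n})
    ⟨0, ∅, by simp [isIndep], rfl⟩ (bddAbove_card_isIndep G)

omit [DecidableEq V] in
theorem exists_isMatchingF_card_eq_matchNum (G : SimpleGraph V) :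
    ∃ M, isMatchingF G M ∧ M.card = matchNum G :=
  Nat.sSup_mem (s := {n | ∃ M : Finset (Sym2 V), isMatchingF G M ∧ M.card = n})
    ⟨0, ∅, by simp [isMatchingF], rfl⟩
    ⟨Fintype.card (Sym2 V), by rintro n ⟨M, -, rfl⟩; exact M.card_le_univ⟩

namespace isMatchingF

variable {G : SimpleGraph V} {M : Finset (Sym2 V)}

omit [Fintype V] in
theorem eq_of_mem_of_mem (hM : isMatchingF G M) {e f : Sym2 V} (he : e ∈ M) (hf : f ∈ M)
    {v : V} (hve : v ∈ e) (hvf : v ∈ f) : e = f := by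
  by_contra hef
  exact hM.2 e he f hf hef v hve hvf

omit [Fintype V] in
theorem card_toFinset (hM : isMatchingF G M) {e : Sym2 V} (he : e ∈ M) : e.toFinset.card = 2 :=
  Sym2.card_toFinset_of_not_isDiag e (G.not_isDiag_of_mem_edgeSet (hM.1 e he))

omit [Fintype V] in
theorem pairwiseDisjoint (hM : isMatchingF G M) :
    (M : Set (Sym2 V)).PairwiseDisjoint Sym2.toFinset := by
  intro e he f hf hef
  rw [Function.onFun, Finset.disjoint_left]
  intro v hve hvf
  exact hef (hM.eq_of_mem_of_mem he hf (Sym2.mem_toFinset.1 hve) (Sym2.mem_toFinset.1 hvf))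

omit [Fintype V] in
theorem card_biUnion_toFinset (hM : isMatchingF G M) :
    (M.biUnion Sym2.toFinset).card = 2 * M.card := by
  rw [Finset.card_biUnion hM.pairwiseDisjoint, Finset.sum_congr rfl fun e he => hM.card_toFinset he,
    Finset.sum_const, smul_eq_mul, mul_comm]

theorem two_mul_card_le (hM : isMatchingF G M) : 2 * M.card ≤ Fintype.card V :=
  hM.card_biUnion_toFinset ▸ Finset.card_le_univ _

omit [Fintype V] in
theorem card_inter_toFinset_le_one (hM : isMatchingF G M) {S : Finset V} (hS : isIndep G S)
    {e : Sym2 V} (he : e ∈ M) : (S ∩ e.toFinset).card ≤ 1 := by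
  refine Finset.card_le_one.2 fun a ha b hb => by_contra fun hab => ?_
  simp only [Finset.mem_inter, Sym2.mem_toFinset] at ha hb
  have hadj := hM.1 e he
  rw [(Sym2.mem_and_mem_iff hab).1 ⟨ha.2, hb.2⟩, SimpleGraph.mem_edgeSet] at hadj
  exact hS ha.1 hb.1 hadj

omit [Fintype V] in
theorem sum_card_inter_toFinset_le (hM : isMatchingF G M) {S : Finset V} (hS : isIndep G S) :
    ∑ e ∈ M, (S ∩ e.toFinset).card ≤ M.card :=
  (Finset.sum_le_card_nsmul _ _ 1 fun _ he => hM.card_inter_toFinset_le_one hS he).trans_eq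
    (smul_eq_mul _ _ |>.trans (mul_one _))

omit [Fintype V] in
theorem card_eq_sum_add_card_sdiff (hM : isMatchingF G M) (S : Finset V) :
    S.card = ∑ e ∈ M, (S ∩ e.toFinset).card + (S \ M.biUnion Sym2.toFinset).card := by
  rw [← Finset.card_inter_add_card_sdiff S (M.biUnion Sym2.toFinset), Finset.inter_biUnion,
    Finset.card_biUnion (hM.pairwiseDisjoint.mono_on fun e _ => Finset.inter_subset_right)]

theorem card_compl_biUnion_toFinset (hM : isMatchingF G M) :
    (M.biUnion Sym2.toFinset)ᶜ.card + 2 * M.card = Fintype.card V := by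
  rw [← hM.card_biUnion_toFinset, Finset.card_compl_add_card]

end isMatchingF

/-- Independent sets attaining the bound `|S| + |M| ≤ |V|`, which holds for every independent set
`S` and matching `M`. -/
def IsTightIndep (G : SimpleGraph V) (M : Finset (Sym2 V)) (S : Finset V) : Prop :=
  isIndep G S ∧ S.card + M.card = Fintype.card V

omit [DecidableEq V] in
theorem setOf_isMaxIndep_eq_setOf_isTightIndep {G : SimpleGraph V} {M : Finset (Sym2 V)}
    (hKE : _root_.indepNum G + matchNum G = Fintype.card V) (hMc : M.card = matchNum G) :
    {S | isMaxIndep G S} = {S | IsTightIndep G M S} := by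
  ext S
  exact and_congr_right fun _ => by omega

/-- `Sym2.out` fixes an arbitrary orientation of each edge of `M`. -/
noncomputable def matchingCode (M : Finset (Sym2 V)) (S : Finset V) : Finset (Sym2 V) :=
  M.filter fun e => e.out.1 ∈ S

namespace IsTightIndep

variable {G : SimpleGraph V} {M : Finset (Sym2 V)} {S : Finset V}

theorem compl_subset_and_card_inter_eq_one (hS : IsTightIndep G M S) (hM : isMatchingF G M) :
    (M.biUnion Sym2.toFinset)ᶜ ⊆ S ∧ ∀ e ∈ M, (S ∩ e.toFinset).card = 1 := by
  obtain ⟨hS, htight⟩ := hS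
  have hsum := hM.sum_card_inter_toFinset_le hS
  have hsub : S \ M.biUnion Sym2.toFinset ⊆ (M.biUnion Sym2.toFinset)ᶜ :=
    sdiff_eq.trans_le inf_le_right
  have hout := Finset.card_le_card hsub
  have hcompl := hM.card_compl_biUnion_toFinset
  rw [hM.card_eq_sum_add_card_sdiff S] at htight
  constructor
  · rw [← Finset.eq_of_subset_of_card_le hsub (by omega)]
    exact Finset.sdiff_subset
  · refine (Finset.sum_eq_sum_iff_of_le fun e he => hM.card_inter_toFinset_le_one hS he).1 ?_
    rw [Finset.sum_const, smul_eq_mul, mul_one]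
    omega

theorem mem_iff (hS : IsTightIndep G M S) (hM : isMatchingF G M) {e : Sym2 V} (he : e ∈ M)
    {v : V} (hv : v ∈ e) : v ∈ S ↔ (v = e.out.1 ↔ e ∈ matchingCode M S) := by
  obtain ⟨a, ha⟩ := Finset.card_eq_one.1 ((hS.compl_subset_and_card_inter_eq_one hM).2 e he)
  have hmem : ∀ w ∈ e, w ∈ S ↔ w = a := fun w hw => by
    simpa [Sym2.mem_toFinset, hw] using Finset.ext_iff.1 ha w
  have ha : a ∈ e :=
    Sym2.mem_toFinset.1 (Finset.mem_inter.1 (ha ▸ Finset.mem_singleton_self a)).2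
  have hcode : e ∈ matchingCode M S ↔ e.out.1 ∈ S := by simp [matchingCode, he]
  rw [hcode, hmem v hv, hmem _ e.out_fst_mem]
  have ho := e.out_fst_mem
  generalize e.out.1 = o at ho
  obtain ⟨⟨x, y⟩, rfl⟩ := Quot.exists_rep e
  have hxy : x ≠ y := (hM.1 _ he).ne
  simp only [Sym2.mem_iff] at hv ha ho
  grind

end IsTightIndep

namespace isMatchingF

variable {G : SimpleGraph V} {M : Finset (Sym2 V)}

theorem injOn_matchingCode (hM : isMatchingF G M) :
    Set.InjOn (matchingCode M) {S | IsTightIndep G M S} := by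
  intro S₁ hS₁ S₂ hS₂ hcode
  ext v
  by_cases hv : v ∈ M.biUnion Sym2.toFinset
  · obtain ⟨e, he, hve⟩ := Finset.mem_biUnion.1 hv
    rw [Sym2.mem_toFinset] at hve
    rw [hS₁.mem_iff hM he hve, hS₂.mem_iff hM he hve, hcode]
  · rw [← Finset.mem_compl] at hv
    exact iff_of_true ((hS₁.compl_subset_and_card_inter_eq_one hM).1 hv)
      ((hS₂.compl_subset_and_card_inter_eq_one hM).1 hv)

omit [Fintype V] in
theorem matchingCode_mem_powerset (M : Finset (Sym2 V)) (S : Finset V) :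
    matchingCode M S ∈ M.powerset :=
  Finset.mem_powerset.2 (Finset.filter_subset _ _)

theorem ncard_isTightIndep_le (hM : isMatchingF G M) :
    {S | IsTightIndep G M S}.ncard ≤ 2 ^ M.card := by
  rw [← Finset.card_powerset, ← Set.ncard_coe_finset]
  exact Set.ncard_le_ncard_of_injOn _ (fun S _ => matchingCode_mem_powerset M S)
    hM.injOn_matchingCode

theorem image_matchingCode_eq_powerset (hM : isMatchingF G M)
    (h : {S | IsTightIndep G M S}.ncard = 2 ^ M.card) :
    matchingCode M '' {S | IsTightIndep G M S} = M.powerset := by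
  refine Set.eq_of_subset_of_ncard_le ?_ ?_
  · rintro _ ⟨S, -, rfl⟩
    exact matchingCode_mem_powerset M S
  · rw [hM.injOn_matchingCode.ncard_image, h, Set.ncard_coe_finset, Finset.card_powerset]

theorem exists_isTightIndep_mem_mem (hM : isMatchingF G M)
    (h : {S | IsTightIndep G M S}.ncard = 2 ^ M.card) {e f : Sym2 V} (he : e ∈ M) (hf : f ∈ M)
    (hef : e ≠ f) {x y : V} (hx : x ∈ e) (hy : y ∈ f) :
    ∃ S, IsTightIndep G M S ∧ x ∈ S ∧ y ∈ S := by
  -- Every subset of `M` is a code; this one selects `x` from `e` and `y` from `f`.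
  obtain ⟨S, hS, hcode⟩ : M.filter (fun g => g.out.1 = x ∨ g.out.1 = y) ∈
      matchingCode M '' {S | IsTightIndep G M S} := by
    rw [hM.image_matchingCode_eq_powerset h]
    exact Finset.mem_powerset.2 (Finset.filter_subset _ _)
  have hy' : y ≠ e.out.1 := fun h' => hef (hM.eq_of_mem_of_mem he hf (h' ▸ e.out_fst_mem) hy)
  have hx' : x ≠ f.out.1 := fun h' => hef (hM.eq_of_mem_of_mem he hf hx (h' ▸ f.out_fst_mem))
  refine ⟨S, hS, ?_, ?_⟩
  · rw [hS.mem_iff hM he hx, hcode]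
    simp [he, hy', eq_comm]
  · rw [hS.mem_iff hM hf hy, hcode]
    simp [hf, hx', eq_comm]

theorem mem_of_adj (hM : isMatchingF G M) (hcover : ∀ v, ∃ e ∈ M, v ∈ e)
    (h : {S | IsTightIndep G M S}.ncard = 2 ^ M.card) {x y : V} (hxy : G.Adj x y) :
    s(x, y) ∈ M := by
  obtain ⟨e, he, hx⟩ := hcover x
  obtain ⟨f, hf, hy⟩ := hcover y
  by_cases hef : e = f
  · subst hef
    rwa [← (Sym2.mem_and_mem_iff hxy.ne).1 ⟨hx, hy⟩]
  · obtain ⟨S, hS, hxS, hyS⟩ := hM.exists_isTightIndep_mem_mem h he hf hef hx hy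
    exact (hS.1 hxS hyS hxy).elim

end isMatchingF

theorem exists_equiv_prod_fin_two {α ι : Type*} [Fintype α] [DecidableEq ι] (f : α → ι)
    (hf : ∀ i, Fintype.card {a // f a = i} = 2) :
    ∃ e : α ≃ ι × Fin 2, ∀ a, (e a).1 = f a :=
  ⟨(Equiv.sigmaFiberEquiv f).symm.trans ((Equiv.sigmaCongrRight fun i =>
      Fintype.equivFinOfCardEq (hf i)).trans (Equiv.sigmaEquivProd ι (Fin 2))), fun _ => rfl⟩

theorem copiesK2_adj {k : ℕ} {p q : Fin k × Fin 2} :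
    (copiesK2 k).Adj p q ↔ p ≠ q ∧ p.1 = q.1 := by
  simp [copiesK2, eq_comm]

omit [DecidableEq V] in
theorem nonempty_iso_copiesK2 {G : SimpleGraph V} {k : ℕ} (f : V → Fin k)
    (hf : ∀ i, Fintype.card {v // f v = i} = 2)
    (hadj : ∀ x y, G.Adj x y ↔ x ≠ y ∧ f x = f y) :
    Nonempty (G ≃g copiesK2 k) := by
  obtain ⟨e, he⟩ := exists_equiv_prod_fin_two f hf
  exact ⟨⟨e, by simp only [copiesK2_adj, ne_eq, e.apply_eq_iff_eq, he, hadj, implies_true]⟩⟩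

theorem isMatchingF.nonempty_iso_copiesK2 {G : SimpleGraph V} {M : Finset (Sym2 V)}
    (hM : isMatchingF G M) (hcover : ∀ v, ∃ e ∈ M, v ∈ e)
    (hedge : ∀ x y, G.Adj x y → s(x, y) ∈ M) : Nonempty (G ≃g copiesK2 M.card) := by
  choose cov hcovM hcov using hcover
  have hcov_eq : ∀ v, ∀ e ∈ M, v ∈ e → cov v = e :=
    fun v e he hv => hM.eq_of_mem_of_mem (hcovM v) he (hcov v) hv
  let ι := M.equivFin
  refine _root_.nonempty_iso_copiesK2 (fun v => ι ⟨cov v, hcovM v⟩) (fun i => ?_)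
    (fun x y => ?_)
  · have hfiber : ∀ v, ι ⟨cov v, hcovM v⟩ = i ↔ v ∈ (ι.symm i : Sym2 V).toFinset := by
      intro v
      rw [← ι.eq_symm_apply, Subtype.ext_iff, Sym2.mem_toFinset]
      exact ⟨fun h => h ▸ hcov v, hcov_eq v _ (ι.symm i).2⟩
    rw [Fintype.card_congr (Equiv.subtypeEquivRight hfiber), Fintype.card_coe,
      hM.card_toFinset (ι.symm i).2]
  · rw [ι.apply_eq_iff_eq, Subtype.mk.injEq]
    constructor
    · intro h
      exact ⟨h.ne, (hcov_eq x _ (hedge x y h) (Sym2.mem_mk_left x y)).trans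
        (hcov_eq y _ (hedge x y h) (Sym2.mem_mk_right x y)).symm⟩
    · rintro ⟨hne, hc⟩
      have hyx := hM.1 _ (hcovM y)
      rwa [(Sym2.mem_and_mem_iff hne).1 ⟨hc ▸ hcov x, hcov y⟩] at hyx

theorem isMatchingF.nonempty_iso_copiesK2_of_ncard_eq {G : SimpleGraph V} {M : Finset (Sym2 V)}
    (hM : isMatchingF G M) (hperfect : 2 * M.card = Fintype.card V)
    (h : {S | IsTightIndep G M S}.ncard = 2 ^ M.card) : Nonempty (G ≃g copiesK2 M.card) := by
  have hcover : ∀ v, ∃ e ∈ M, v ∈ e := by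
    have hcompl := hM.card_compl_biUnion_toFinset
    intro v
    have hv : v ∈ M.biUnion Sym2.toFinset := by
      by_contra hv
      have := Finset.card_pos.2 ⟨v, Finset.mem_compl.2 hv⟩
      omega
    simpa [Sym2.mem_toFinset] using hv
  exact hM.nonempty_iso_copiesK2 hcover fun x y hxy => hM.mem_of_adj hcover h hxy

section copiesK2

variable {k : ℕ}

theorem isIndep_copiesK2_iff {S : Finset (Fin k × Fin 2)} :
    isIndep (copiesK2 k) S ↔ Set.InjOn Prod.fst (S : Set (Fin k × Fin 2)) := by
  simp only [isIndep, copiesK2_adj, Set.InjOn, Finset.mem_coe, not_and, not_imp_comm, not_not]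

theorem card_le_of_isIndep_copiesK2 {S : Finset (Fin k × Fin 2)} (hS : isIndep (copiesK2 k) S) :
    S.card ≤ k := by
  simpa using Finset.card_le_card_of_injOn (t := Finset.univ) Prod.fst
    (fun _ _ => Finset.mem_coe.2 (Finset.mem_univ _)) (isIndep_copiesK2_iff.1 hS)

theorem isIndep_copiesK2_image_graph (f : Fin k → Fin 2) :
    isIndep (copiesK2 k) (Finset.univ.image fun i => (i, f i)) := by
  rw [isIndep_copiesK2_iff, Finset.coe_image]
  rintro _ ⟨i, -, rfl⟩ _ ⟨j, -, rfl⟩ (rfl : i = j)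
  rfl

theorem card_image_graph (f : Fin k → Fin 2) :
    (Finset.univ.image fun i => (i, f i)).card = k := by
  rw [Finset.card_image_of_injective _ fun i j h => congrArg Prod.fst h, Finset.card_univ,
    Fintype.card_fin]

theorem indepNum_copiesK2 : _root_.indepNum (copiesK2 k) = k :=
  le_antisymm (csSup_le ⟨0, ∅, by simp [isIndep], rfl⟩ fun _ ⟨_, hS, hn⟩ =>
      hn ▸ card_le_of_isIndep_copiesK2 hS)
    (by simpa only [card_image_graph] using
      card_le_indepNum_s14 (isIndep_copiesK2_image_graph (k := k) 0))

theorem isMaxIndep_copiesK2_iff {S : Finset (Fin k × Fin 2)} :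
    isMaxIndep (copiesK2 k) S ↔
      ∃ f : Fin k → Fin 2, (Finset.univ.image fun i => (i, f i)) = S := by
  rw [isMaxIndep, indepNum_copiesK2]
  constructor
  · rintro ⟨hS, hcard⟩
    have hfst : S.image Prod.fst = Finset.univ := Finset.eq_univ_of_card _ (by
      rw [Finset.card_image_of_injOn (isIndep_copiesK2_iff.1 hS), hcard, Fintype.card_fin])
    have hsec : ∀ i, ∃ j, (i, j) ∈ S := fun i => by
      obtain ⟨p, hp, rfl⟩ := Finset.mem_image.1 (hfst ▸ Finset.mem_univ i)
      exact ⟨p.2, hp⟩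
    choose f hf using hsec
    refine ⟨f, Finset.eq_of_subset_of_card_le ?_ (by rw [hcard, card_image_graph])⟩
    simpa [Finset.image_subset_iff] using hf
  · rintro ⟨f, rfl⟩
    exact ⟨isIndep_copiesK2_image_graph f, card_image_graph f⟩

theorem ncard_isMaxIndep_copiesK2 : {S | isMaxIndep (copiesK2 k) S}.ncard = 2 ^ k := by
  have hinj :
      Function.Injective fun f : Fin k → Fin 2 => Finset.univ.image fun i => (i, f i) := by
    intro f g h
    funext i
    simpa using (Finset.ext_iff.1 h (i, g i)).2 (by simp)
  have hrange : {S | isMaxIndep (copiesK2 k) S} = Set.range fun f : Fin k → Fin 2 =>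
      Finset.univ.image fun i => (i, f i) := by
    ext S
    exact isMaxIndep_copiesK2_iff
  rw [hrange, Set.ncard_range_of_injective hinj, Nat.card_eq_fintype_card]
  simp

end copiesK2

section Iso

variable {W : Type*} [Fintype W] {G : SimpleGraph V} {H : SimpleGraph W}

omit [Fintype V] [DecidableEq V] [Fintype W] in
theorem isIndep_map (φ : G ≃g H) {S : Finset V} (hS : isIndep G S) :
    isIndep H (S.map φ.toEquiv.toEmbedding) := by
  simp only [isIndep, Finset.mem_map]
  rintro _ ⟨u, hu, rfl⟩ _ ⟨v, hv, rfl⟩ hadj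
  exact hS hu hv (φ.map_adj_iff.1 hadj)

omit [DecidableEq V] in
theorem indepNum_le_of_iso (φ : G ≃g H) : _root_.indepNum G ≤ _root_.indepNum H := by
  obtain ⟨S, hS, hcard⟩ := exists_isMaxIndep G
  exact hcard ▸ S.card_map φ.toEquiv.toEmbedding ▸ card_le_indepNum_s14 (isIndep_map φ hS)

omit [DecidableEq V] in
theorem indepNum_eq_of_iso (φ : G ≃g H) : _root_.indepNum G = _root_.indepNum H :=
  le_antisymm (indepNum_le_of_iso φ) (indepNum_le_of_iso φ.symm)

omit [DecidableEq V] in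
theorem ncard_isMaxIndep_le_of_iso (φ : G ≃g H) :
    {S | isMaxIndep G S}.ncard ≤ {T | isMaxIndep H T}.ncard :=
  Set.ncard_le_ncard_of_injOn (Finset.map φ.toEquiv.toEmbedding)
    (fun S hS => ⟨isIndep_map φ hS.1, by rw [Finset.card_map, hS.2, indepNum_eq_of_iso φ]⟩)
    (Finset.map_injective _).injOn

omit [DecidableEq V] in
theorem ncard_isMaxIndep_eq_of_iso (φ : G ≃g H) :
    {S | isMaxIndep G S}.ncard = {T | isMaxIndep H T}.ncard :=
  le_antisymm (ncard_isMaxIndep_le_of_iso φ) (ncard_isMaxIndep_le_of_iso φ.symm)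

end Iso

/-- A König–Egerváry graph has at most `2^{α(G)}` maximum independent sets, with
equality iff `G` is the disjoint union of `α(G)` copies of `K₂`. -/
theorem stmt14 (G : SimpleGraph V)
    (hKE : _root_.indepNum G + matchNum G = Fintype.card V) :
    {S : Finset V | isMaxIndep G S}.ncard ≤ 2 ^ _root_.indepNum G ∧
      ({S : Finset V | isMaxIndep G S}.ncard = 2 ^ _root_.indepNum G ↔
        Nonempty (G ≃g copiesK2 (_root_.indepNum G))) := by
  obtain ⟨M, hM, hMc⟩ := exists_isMatchingF_card_eq_matchNum G
  rw [setOf_isMaxIndep_eq_setOf_isTightIndep hKE hMc]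
  have hμα : M.card ≤ _root_.indepNum G := by
    have := hM.two_mul_card_le
    omega
  have hle := hM.ncard_isTightIndep_le
  refine ⟨hle.trans (Nat.pow_le_pow_right two_pos hμα), fun heq => ?_, fun ⟨φ⟩ => ?_⟩
  · have hMα : M.card = _root_.indepNum G :=
      le_antisymm hμα ((Nat.pow_le_pow_iff_right one_lt_two).1 (heq ▸ hle))
    rw [← hMα] at heq ⊢
    exact hM.nonempty_iso_copiesK2_of_ncard_eq (by omega) heq
  · rw [← setOf_isMaxIndep_eq_setOf_isTightIndep hKE hMc, ncard_isMaxIndep_eq_of_iso φ,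
      ncard_isMaxIndep_copiesK2]
end
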